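/- arXiv:1711.00264 — 4 statements merged into one kernel-verified Lean document; each statement's English description precedes it below -/
import Mathlib

section
/- Let X and Y be finite types and let p be a strictly positive probability mass function on (X×Y)^{k+2} (states (x_0,y_0),…,(x_{k+1},y_{k+1})) satisfying the bipartite Markov property. If y_j is a sufficient statistic of x_j at time j = k, i.e. p(x_k | y_0,…,y_k) = p(x_k | y_k) for all arguments, then the multi-time-step transfer entropy equals the single-time-step transfer entropy: I(X_k : Y_{k+1} | (Y_0,…,Y_k)) = I(X_k : Y_{k+1} | Y_k). (Theorem 1, equivalence of the transfer entropies.) -/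
open Finset

/-- Marginal (pushforward) of a pmf `p` on `Ω` along an observable `f`. -/
def margin {Ω α : Type*} [Fintype Ω] [DecidableEq α] (p : Ω → ℝ) (f : Ω → α) (a : α) : ℝ :=
  ∑ ω : Ω, if f ω = a then p ω else 0

/-- Conditional probability `p(a | b)` of observable `f` given observable `g`. -/
noncomputable def condProb {Ω α β : Type*} [Fintype Ω] [DecidableEq α] [DecidableEq β]
    (p : Ω → ℝ) (f : Ω → α) (g : Ω → β) (a : α) (b : β) : ℝ :=
  margin p (fun ω => (f ω, g ω)) (a, b) / margin p g b

/-- Mutual information `I(f : g)` of observables `f` and `g`. -/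
noncomputable def mutualInfo {Ω α β : Type*} [Fintype Ω] [Fintype α] [Fintype β]
    [DecidableEq α] [DecidableEq β] (p : Ω → ℝ) (f : Ω → α) (g : Ω → β) : ℝ :=
  ∑ a : α, ∑ b : β,
    margin p (fun ω => (f ω, g ω)) (a, b) *
      Real.log (margin p (fun ω => (f ω, g ω)) (a, b) / (margin p f a * margin p g b))

/-- Conditional mutual information `I(f : g | h)` of observables `f`, `g` given `h`. -/
noncomputable def condMI {Ω α β γ : Type*} [Fintype Ω] [Fintype α] [Fintype β] [Fintype γ]
    [DecidableEq α] [DecidableEq β] [DecidableEq γ]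
    (p : Ω → ℝ) (f : Ω → α) (g : Ω → β) (h : Ω → γ) : ℝ :=
  ∑ a : α, ∑ b : β, ∑ c : γ,
    margin p (fun ω => (f ω, g ω, h ω)) (a, b, c) *
      Real.log ((margin p (fun ω => (f ω, g ω, h ω)) (a, b, c) / margin p h c) /
        ((margin p (fun ω => (f ω, h ω)) (a, c) / margin p h c) *
          (margin p (fun ω => (g ω, h ω)) (b, c) / margin p h c)))

/-- The bipartite Markov property for a pmf on trajectories `(x_0,y_0),…,(x_{k+1},y_{k+1})`:
for every `0 ≤ j ≤ k`,
`p(x_{j+1}, y_{j+1} | x_0,…,x_j, y_0,…,y_j) = p(x_{j+1} | x_j, y_j) · p(y_{j+1} | x_j, y_j)`. -/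
def BipartiteMarkov {X Y : Type*} [Fintype X] [Fintype Y] [DecidableEq X] [DecidableEq Y]
    (k : ℕ) (p : (Fin (k + 2) → X × Y) → ℝ) : Prop :=
  ∀ j : Fin (k + 1), ∀ h : Fin (j.1 + 1) → X × Y, ∀ x' : X, ∀ y' : Y,
    condProb p (fun t => t j.succ)
        (fun t (i : Fin (j.1 + 1)) => t (Fin.castLE (Nat.succ_le_succ j.isLt.le) i))
        (x', y') h =
      condProb p (fun t => (t j.succ).1) (fun t => t j.castSucc) x' (h (Fin.last j.1)) *
        condProb p (fun t => (t j.succ).2) (fun t => t j.castSucc) y' (h (Fin.last j.1))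

/-!
Write `A = X_k`, `B = Y_{k+1}`, `H = (Y_0, …, Y_k)` and `C = Y_k = π H`. The bipartite Markov
property makes `p(b | a, h)` depend on `h` only through `(a, c)`, and sufficiency gives
`p(a | h) = p(a | c)`; hence `p(b | h) = ∑ₐ p(a | h) p(b | a, c) = p(b | c)`. The pointwise ratio
`p(a, b | h) / (p(a | h) p(b | h)) = p(b | a, c) / p(b | h)` is therefore the same for both
conditionings, and both conditional mutual informations are the mean of its logarithm.
-/

section Margin

variable {Ω α β γ δ : Type*} [Fintype Ω] (p : Ω → ℝ)

lemma margin_pos [DecidableEq α] (hp : ∀ ω, 0 < p ω) {f : Ω → α} {a : α} {ω : Ω}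
    (hω : f ω = a) : 0 < margin p f a :=
  Finset.sum_pos' (fun ω _ => by split_ifs <;> simp [(hp ω).le])
    ⟨ω, mem_univ ω, by simp [hω, hp ω]⟩

lemma margin_congr [DecidableEq α] [DecidableEq β] {f : Ω → α} {g : Ω → β} {a : α} {b : β}
    (h : ∀ ω, f ω = a ↔ g ω = b) : margin p f a = margin p g b :=
  Finset.sum_congr rfl fun ω _ => if_congr (h ω) rfl rfl

lemma margin_left_comm [DecidableEq α] [DecidableEq β] [DecidableEq γ]
    (f : Ω → α) (g : Ω → β) (h : Ω → γ) (a : α) (b : β) (c : γ) :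
    margin p (fun ω => (f ω, g ω, h ω)) (a, b, c) =
      margin p (fun ω => (g ω, f ω, h ω)) (b, a, c) :=
  margin_congr p fun ω => by simp only [Prod.mk.injEq]; tauto

lemma margin_prod_assoc [DecidableEq α] [DecidableEq β] [DecidableEq γ]
    (f : Ω → α) (g : Ω → β) (h : Ω → γ) (a : α) (b : β) (c : γ) :
    margin p (fun ω => (f ω, g ω, h ω)) (a, b, c) =
      margin p (fun ω => ((f ω, g ω), h ω)) ((a, b), c) :=
  margin_congr p fun ω => by simp only [Prod.mk.injEq, and_assoc]

lemma sum_margin_mul [Fintype α] [DecidableEq α] (f : Ω → α) (φ : α → ℝ) :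
    ∑ a, margin p f a * φ a = ∑ ω, p ω * φ (f ω) := by
  simp only [margin, Finset.sum_mul, ite_mul, zero_mul]
  rw [Finset.sum_comm]
  simp

lemma margin_comp [Fintype α] [DecidableEq α] [DecidableEq β] (f : Ω → α) (φ : α → β) (b : β) :
    margin p (fun ω => φ (f ω)) b = ∑ a ∈ univ.filter (φ · = b), margin p f a := by
  simp only [margin]
  rw [Finset.sum_comm]
  simp

lemma margin_eq_sum_margin_prod [Fintype α] [DecidableEq α] [DecidableEq β]
    (f : Ω → α) (g : Ω → β) (b : β) :
    margin p g b = ∑ a, margin p (fun ω => (f ω, g ω)) (a, b) := by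
  simp only [margin]
  rw [Finset.sum_comm]
  simp [Prod.ext_iff, ite_and]

lemma margin_prod_comp [Fintype γ] [DecidableEq β] [DecidableEq γ] [DecidableEq δ]
    (f : Ω → β) (g : Ω → γ) (ψ : γ → δ) (b : β) (d : δ) :
    margin p (fun ω => (f ω, ψ (g ω))) (b, d) =
      ∑ c ∈ univ.filter (ψ · = d), margin p (fun ω => (f ω, g ω)) (b, c) := by
  simp only [margin]
  rw [Finset.sum_comm]
  simp [Prod.ext_iff, ite_and]

lemma margin_prod_eq_condProb_mul [DecidableEq α] [DecidableEq β] (hp : ∀ ω, 0 < p ω)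
    (f : Ω → α) (g : Ω → β) (a : α) (b : β) :
    margin p (fun ω => (f ω, g ω)) (a, b) = condProb p f g a b * margin p g b := by
  by_cases hb : ∃ ω, g ω = b
  · obtain ⟨ω, hω⟩ := hb
    exact (div_mul_cancel₀ _ (margin_pos p hp hω).ne').symm
  · simp only [not_exists] at hb
    have hzero : margin p (fun ω => (f ω, g ω)) (a, b) = 0 :=
      Finset.sum_eq_zero fun ω _ => if_neg fun h => hb ω (Prod.ext_iff.1 h).2
    rw [condProb, hzero, zero_div, zero_mul]

lemma sum_condProb_eq_one [Fintype α] [DecidableEq α] [DecidableEq β] (hp : ∀ ω, 0 < p ω)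
    (f : Ω → α) {g : Ω → β} {b : β} {ω : Ω} (hω : g ω = b) :
    ∑ a, condProb p f g a b = 1 := by
  unfold condProb
  rw [← Finset.sum_div, ← margin_eq_sum_margin_prod]
  exact div_self (margin_pos p hp hω).ne'

lemma condProb_eq_sum_condProb_mul [Fintype α] [DecidableEq α] [DecidableEq β] [DecidableEq γ]
    (A : Ω → α) (B : Ω → β) (G : Ω → γ) (r : α → ℝ) (b : β) (c : γ)
    (hfac : ∀ a, margin p (fun ω => (B ω, A ω, G ω)) (b, a, c) =
      margin p (fun ω => (A ω, G ω)) (a, c) * r a) :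
    condProb p B G b c = ∑ a, condProb p A G a c * r a := by
  unfold condProb
  rw [margin_eq_sum_margin_prod p A, Finset.sum_div]
  refine Finset.sum_congr rfl fun a _ => ?_
  rw [margin_left_comm, hfac, div_mul_eq_mul_div, mul_div_right_comm]

lemma margin_prod_comp_eq_mul [Fintype γ] [DecidableEq β] [DecidableEq γ] [DecidableEq δ]
    (F : Ω → β) (G : Ω → γ) (ψ : γ → δ) (r : δ → β → ℝ)
    (hfac : ∀ b c, margin p (fun ω => (F ω, G ω)) (b, c) = margin p G c * r (ψ c) b)
    (b : β) (d : δ) :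
    margin p (fun ω => (F ω, ψ (G ω))) (b, d) = margin p (fun ω => ψ (G ω)) d * r d b := by
  rw [margin_prod_comp, margin_comp, Finset.sum_mul]
  refine Finset.sum_congr rfl fun c hc => ?_
  rw [hfac, (Finset.mem_filter.1 hc).2]

end Margin

section CondMI

variable {Ω α β γ η : Type*} [Fintype Ω] [DecidableEq α] [DecidableEq β] [DecidableEq γ]
  (p : Ω → ℝ)

noncomputable def pointwiseCondMI (f : Ω → α) (g : Ω → β) (h : Ω → γ) (a : α) (b : β) (c : γ) :
    ℝ :=
  Real.log ((margin p (fun ω => (f ω, g ω, h ω)) (a, b, c) / margin p h c) /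
    ((margin p (fun ω => (f ω, h ω)) (a, c) / margin p h c) *
      (margin p (fun ω => (g ω, h ω)) (b, c) / margin p h c)))

lemma condMI_eq_sum_pointwiseCondMI [Fintype α] [Fintype β] [Fintype γ]
    (f : Ω → α) (g : Ω → β) (h : Ω → γ) :
    condMI p f g h = ∑ ω, p ω * pointwiseCondMI p f g h (f ω) (g ω) (h ω) := by
  rw [← sum_margin_mul p (fun ω => (f ω, g ω, h ω))
    (fun x => pointwiseCondMI p f g h x.1 x.2.1 x.2.2)]
  simp only [condMI, pointwiseCondMI, Fintype.sum_prod_type]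

lemma pointwiseCondMI_eq_log_div (f : Ω → α) (g : Ω → β) (h : Ω → γ) {a : α} {b : β} {c : γ}
    {r : ℝ} (hfh : margin p (fun ω => (f ω, h ω)) (a, c) ≠ 0) (hh : margin p h c ≠ 0)
    (hfac : margin p (fun ω => (f ω, g ω, h ω)) (a, b, c) =
      margin p (fun ω => (f ω, h ω)) (a, c) * r) :
    pointwiseCondMI p f g h a b c = Real.log (r / condProb p g h b c) := by
  rw [pointwiseCondMI, hfac, condProb]
  congr 1
  field_simp

theorem condMI_eq_condMI_comp_of_sufficient [Fintype α] [Fintype β] [Fintype γ] [Fintype η]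
    [DecidableEq η]
    (hp : ∀ ω, 0 < p ω) (A : Ω → α) (B : Ω → β) (H : Ω → η) (π : η → γ) (q : α × γ → β → ℝ)
    (hmarkov : ∀ b a h, margin p (fun ω => (B ω, A ω, H ω)) (b, a, h) =
      margin p (fun ω => (A ω, H ω)) (a, h) * q (a, π h) b)
    (hsuff : ∀ a h, condProb p A H a h = condProb p A (fun ω => π (H ω)) a (π h)) :
    condMI p A B H = condMI p A B (fun ω => π (H ω)) := by
  have hcoarse := margin_prod_comp_eq_mul p B (fun ω => (A ω, H ω)) (fun x => (x.1, π x.2)) q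
    fun b x => hmarkov b x.1 x.2
  have hB : ∀ b h, condProb p B H b h = condProb p B (fun ω => π (H ω)) b (π h) := by
    intro b h
    rw [condProb_eq_sum_condProb_mul p A B H (fun a => q (a, π h) b) b h (hmarkov b · h),
      condProb_eq_sum_condProb_mul p A B _ (fun a => q (a, π h) b) b (π h) (hcoarse b ⟨·, π h⟩)]
    simp_rw [hsuff]
  rw [condMI_eq_sum_pointwiseCondMI, condMI_eq_sum_pointwiseCondMI]
  refine Finset.sum_congr rfl fun ω _ => ?_
  rw [pointwiseCondMI_eq_log_div p A B H (margin_pos p hp rfl).ne' (margin_pos p hp rfl).ne'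
      ((margin_left_comm ..).trans (hmarkov _ _ _)),
    pointwiseCondMI_eq_log_div p A B _ (margin_pos p hp rfl).ne' (margin_pos p hp rfl).ne'
      ((margin_left_comm ..).trans (hcoarse _ (A ω, π (H ω)))), hB]

end CondMI

lemma BipartiteMarkov.margin_snd_last_history {X Y : Type*} [Fintype X] [Fintype Y]
    [DecidableEq X] [DecidableEq Y] {k : ℕ} {p : (Fin (k + 2) → X × Y) → ℝ}
    (hp : ∀ ω, 0 < p ω) (hbip : BipartiteMarkov k p) (y : Y) (h : Fin (k + 1) → X × Y) :
    margin p (fun t => ((t (Fin.last (k + 1))).2, fun i : Fin (k + 1) => t i.castSucc)) (y, h) =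
      margin p (fun t (i : Fin (k + 1)) => t i.castSucc) h *
        condProb p (fun t => (t (Fin.last (k + 1))).2) (fun t => t (Fin.last k).castSucc) y
          (h (Fin.last k)) := by
  have hfactor : ∀ x, margin p (fun t => ((t (Fin.last (k + 1))).1, (t (Fin.last (k + 1))).2,
      fun i : Fin (k + 1) => t i.castSucc)) (x, y, h) =
        margin p (fun t (i : Fin (k + 1)) => t i.castSucc) h *
          condProb p (fun t => (t (Fin.last (k + 1))).2) (fun t => t (Fin.last k).castSucc) y
            (h (Fin.last k)) *
          condProb p (fun t => (t (Fin.last (k + 1))).1) (fun t => t (Fin.last k).castSucc) x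
            (h (Fin.last k)) := by
    intro x
    have hstep : condProb p (fun t => ((t (Fin.last (k + 1))).1, (t (Fin.last (k + 1))).2))
        (fun t (i : Fin (k + 1)) => t i.castSucc) (x, y) h =
          condProb p (fun t => (t (Fin.last (k + 1))).1) (fun t => t (Fin.last k).castSucc) x
            (h (Fin.last k)) *
          condProb p (fun t => (t (Fin.last (k + 1))).2) (fun t => t (Fin.last k).castSucc) y
            (h (Fin.last k)) :=
      hbip (Fin.last k) h x y
    rw [margin_prod_assoc, margin_prod_eq_condProb_mul p hp, hstep]
    ring
  rw [margin_eq_sum_margin_prod p (fun t => (t (Fin.last (k + 1))).1), Finset.sum_congr rfl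
    fun x _ => hfactor x, ← Finset.mul_sum,
    sum_condProb_eq_one p hp _ (ω := fun _ => h (Fin.last k)) rfl, mul_one]

/-- Theorem 1 (equivalence of the transfer entropies): if `y_k` is a sufficient statistic of
`x_k`, i.e. `p(x_k | y_0,…,y_k) = p(x_k | y_k)`, then
`I(X_k : Y_{k+1} | (Y_0,…,Y_k)) = I(X_k : Y_{k+1} | Y_k)`. -/
theorem multi_transfer_eq_single_transfer {X Y : Type*} [Fintype X] [Fintype Y]
    [DecidableEq X] [DecidableEq Y] (k : ℕ)
    (p : (Fin (k + 2) → X × Y) → ℝ)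
    (hpos : ∀ ω, 0 < p ω)
    (hbip : BipartiteMarkov k p)
    (hsuff : ∀ (x : X) (ys : Fin (k + 1) → Y),
      condProb p (fun t => (t ⟨k, by omega⟩).1)
          (fun t (i : Fin (k + 1)) => (t i.castSucc).2) x ys =
        condProb p (fun t => (t ⟨k, by omega⟩).1)
          (fun t => (t ⟨k, by omega⟩).2) x (ys (Fin.last k))) :
    condMI p (fun t => (t ⟨k, by omega⟩).1) (fun t => (t (Fin.last (k + 1))).2)
        (fun t (i : Fin (k + 1)) => (t i.castSucc).2) =
      condMI p (fun t => (t ⟨k, by omega⟩).1) (fun t => (t (Fin.last (k + 1))).2)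
        (fun t => (t ⟨k, by omega⟩).2) := by
  have hmarkov := margin_prod_comp_eq_mul p (fun t => (t (Fin.last (k + 1))).2)
    (fun t (i : Fin (k + 1)) => t i.castSucc) (fun h => ((h (Fin.last k)).1, fun i => (h i).2))
    (fun s y => condProb p (fun t => (t (Fin.last (k + 1))).2) (fun t => t (Fin.last k).castSucc)
      y (s.1, s.2 (Fin.last k)))
    (hbip.margin_snd_last_history hpos)
  exact condMI_eq_condMI_comp_of_sufficient p hpos (fun t => (t ⟨k, by omega⟩).1)
    (fun t => (t (Fin.last (k + 1))).2) (fun t (i : Fin (k + 1)) => (t i.castSucc).2)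
    (fun ys => ys (Fin.last k))
    (fun s y => condProb p (fun t => (t (Fin.last (k + 1))).2) (fun t => t (Fin.last k).castSucc)
      y s)
    (fun b a ys => hmarkov b (a, ys)) hsuff
end

section
/- Let X, Y be finite types and let q be a strictly positive probability mass function on X×Y×Y for the triple (x_{k+1}, y_k, y_{k+1}). If q(x_{k+1} | y_k, y_{k+1}) = q(x_{k+1} | y_{k+1}) for all arguments (the latest y is a sufficient statistic of the latest x given the previous y), then the single-step transfer-entropy term equals the one-step mutual-information gain: I(X_{k+1} : Y_{k+1} | Y_k) = I(X_{k+1} : Y_{k+1}) − I(X_{k+1} : Y_k). (Exact discrete-time content of Theorem 2: equivalence of the single-time-step transfer entropy and the learning rate under a sufficient statistic.) -/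
/-!
Write every information quantity as an expectation over the sample space. With all marginals
positive, the log-ratios then satisfy the chain rule pointwise:
`I(X : Y_{k+1} | Y_k) = I(X : (Y_k, Y_{k+1})) − I(X : Y_k)`. Since `I(X : Z)` is the expectation
of `log (p(x | z) / p(x))`, sufficiency (`p(x | y_k, y_{k+1}) = p(x | y_{k+1})`) turns
`I(X : (Y_k, Y_{k+1}))` into `I(X : Y_{k+1})`.
-/

open Finset

namespace margin

variable {Ω α : Type*} [Fintype Ω] [DecidableEq α]

theorem sum_mul_eq [Fintype α] (p : Ω → ℝ) (f : Ω → α) (φ : α → ℝ) :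
    ∑ a, margin p f a * φ a = ∑ ω, p ω * φ (f ω) := by
  simp only [margin, Finset.sum_mul, ite_mul, zero_mul]
  rw [Finset.sum_comm]
  simp

theorem apply_pos {p : Ω → ℝ} (hp : ∀ ω, 0 < p ω) (f : Ω → α) (ω : Ω) :
    0 < margin p f (f ω) :=
  calc 0 < p ω := hp ω
    _ = ∑ ω' ∈ {ω}, if f ω' = f ω then p ω' else 0 := by simp
    _ ≤ margin p f (f ω) :=
      Finset.sum_le_sum_of_subset_of_nonneg (Finset.subset_univ _) fun ω' _ _ => by
        split_ifs <;> [exact (hp ω').le; exact le_rfl]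

theorem comp_injective {β : Type*} [DecidableEq β] (p : Ω → ℝ) (f : Ω → α) {e : α → β}
    (he : e.Injective) (a : α) : margin p (fun ω => e (f ω)) (e a) = margin p f a := by
  simp only [margin, he.eq_iff]

end margin

section

variable {Ω α β γ : Type*} [Fintype Ω] [Fintype α] [Fintype β] [Fintype γ]
  [DecidableEq α] [DecidableEq β] [DecidableEq γ]

theorem mutualInfo_eq_sum (p : Ω → ℝ) (f : Ω → α) (g : Ω → β) :
    mutualInfo p f g = ∑ ω, p ω * Real.log (margin p (fun ω => (f ω, g ω)) (f ω, g ω) /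
      (margin p f (f ω) * margin p g (g ω))) := by
  rw [mutualInfo, ← Fintype.sum_prod_type']
  exact margin.sum_mul_eq p (fun ω => (f ω, g ω)) fun x =>
    Real.log (margin p (fun ω => (f ω, g ω)) x / (margin p f x.1 * margin p g x.2))

theorem condMI_eq_sum (p : Ω → ℝ) (f : Ω → α) (g : Ω → β) (h : Ω → γ) :
    condMI p f g h = ∑ ω, p ω *
      Real.log ((margin p (fun ω => (f ω, g ω, h ω)) (f ω, g ω, h ω) / margin p h (h ω)) /
        ((margin p (fun ω => (f ω, h ω)) (f ω, h ω) / margin p h (h ω)) *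
          (margin p (fun ω => (g ω, h ω)) (g ω, h ω) / margin p h (h ω)))) := by
  simp only [condMI, ← Fintype.sum_prod_type']
  exact margin.sum_mul_eq p (fun ω => (f ω, g ω, h ω)) fun x =>
    Real.log ((margin p (fun ω => (f ω, g ω, h ω)) x / margin p h x.2.2) /
      ((margin p (fun ω => (f ω, h ω)) (x.1, x.2.2) / margin p h x.2.2) *
        (margin p (fun ω => (g ω, h ω)) x.2 / margin p h x.2.2)))

theorem mutualInfo_eq_sum_condProb (p : Ω → ℝ) (f : Ω → α) (g : Ω → β) :
    mutualInfo p f g =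
      ∑ ω, p ω * Real.log (condProb p f g (f ω) (g ω) / margin p f (f ω)) := by
  simp only [mutualInfo_eq_sum, condProb, div_mul_eq_div_div_swap]

theorem mutualInfo_congr_of_condProb_eq {δ : Type*} [Fintype δ] [DecidableEq δ] (p : Ω → ℝ)
    (f : Ω → α) (g : Ω → β) (g' : Ω → δ)
    (h : ∀ ω, condProb p f g (f ω) (g ω) = condProb p f g' (f ω) (g' ω)) :
    mutualInfo p f g = mutualInfo p f g' := by
  simp only [mutualInfo_eq_sum_condProb, h]

theorem condMI_eq_mutualInfo_sub {p : Ω → ℝ} (hp : ∀ ω, 0 < p ω)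
    (f : Ω → α) (g : Ω → β) (h : Ω → γ) :
    condMI p f g h = mutualInfo p f (fun ω => (h ω, g ω)) - mutualInfo p f h := by
  rw [condMI_eq_sum, mutualInfo_eq_sum, mutualInfo_eq_sum, ← Finset.sum_sub_distrib]
  refine Finset.sum_congr rfl fun ω _ => ?_
  have hfhg : margin p (fun ω => (f ω, h ω, g ω)) (f ω, h ω, g ω) =
      margin p (fun ω => (f ω, g ω, h ω)) (f ω, g ω, h ω) :=
    margin.comp_injective p (fun ω => (f ω, g ω, h ω))
      (Function.injective_id.prodMap Prod.swap_injective) (f ω, g ω, h ω)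
  have hhg : margin p (fun ω => (h ω, g ω)) (h ω, g ω) =
      margin p (fun ω => (g ω, h ω)) (g ω, h ω) :=
    margin.comp_injective p (fun ω => (g ω, h ω)) Prod.swap_injective (g ω, h ω)
  have hfgh := margin.apply_pos hp (fun ω => (f ω, g ω, h ω)) ω
  have hfh := margin.apply_pos hp (fun ω => (f ω, h ω)) ω
  have hgh := margin.apply_pos hp (fun ω => (g ω, h ω)) ω
  have hf := margin.apply_pos hp f ω
  have hh := margin.apply_pos hp h ω
  rw [hfhg, hhg, ← mul_sub, ← Real.log_div (by positivity) (by positivity)]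
  congr 2
  field_simp

end

theorem suff_implies_transfer_eq_gain_general {X Y : Type*} [Fintype X] [Fintype Y]
    [DecidableEq X] [DecidableEq Y]
    (q : X × Y × Y → ℝ) (hpos : ∀ ω, 0 < q ω)
    (hsuff : ∀ x yk yk1, condProb q (fun w => w.1) (fun w => w.2) x (yk, yk1) =
      condProb q (fun w => w.1) (fun w => w.2.2) x yk1) :
    condMI q (fun w => w.1) (fun w => w.2.2) (fun w => w.2.1) =
      mutualInfo q (fun w => w.1) (fun w => w.2.2) -
        mutualInfo q (fun w => w.1) (fun w => w.2.1) := by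
  rw [condMI_eq_mutualInfo_sub hpos]
  congr 1
  exact mutualInfo_congr_of_condProb_eq _ _ _ _ fun w => hsuff w.1 w.2.1 w.2.2

/-- For a strictly positive pmf `q` on triples `(x_{k+1}, y_k, y_{k+1})`, if
`q(x_{k+1} | y_k, y_{k+1}) = q(x_{k+1} | y_{k+1})` for all arguments, then
`I(X_{k+1} : Y_{k+1} | Y_k) = I(X_{k+1} : Y_{k+1}) − I(X_{k+1} : Y_k)`. -/
theorem suff_implies_transfer_eq_gain {X Y : Type*} [Fintype X] [Fintype Y]
    [DecidableEq X] [DecidableEq Y]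
    (q : X × Y × Y → ℝ) (hpos : ∀ ω, 0 < q ω) (hnorm : ∑ ω, q ω = 1)
    (hsuff : ∀ x yk yk1, condProb q (fun w => w.1) (fun w => w.2) x (yk, yk1) =
      condProb q (fun w => w.1) (fun w => w.2.2) x yk1) :
    condMI q (fun w => w.1) (fun w => w.2.2) (fun w => w.2.1) =
      mutualInfo q (fun w => w.1) (fun w => w.2.2) -
        mutualInfo q (fun w => w.1) (fun w => w.2.1) :=
  suff_implies_transfer_eq_gain_general q hpos hsuff
end

section
/- Let a¹¹, a¹², a²¹, a²² be real numbers with a²¹ ≠ 0 satisfying the stability conditions a¹¹ + a²² < 0 and a¹¹a²² − a¹²a²¹ > 0, and let r > 0. Then the single-step sensory capacity and the information-thermodynamic efficiency of the stationary bipartite linear Langevin system satisfy the exact trade-off equality C̄_Y(r) = 4 η_Y(r) (1 − η_Y(r)). (Equation (43).) -/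
/-!
Both `η_Y` and `C̄_Y` are rational functions over the common denominator `a²¹ D`, where
`D = (a¹² − a²¹ r)² + r (a¹¹ + a²²)² > 0`. The numerator of `C̄_Y` is four times the product of
the numerator of `η_Y` and that of `1 − η_Y`, which is
`(a²¹ r − a¹²) ((a²¹)² r − a¹² a²¹ + a¹¹ (a¹¹ + a²²))`.
-/

/-- Steady-state information-thermodynamic efficiency `η_Y` of the bipartite linear Langevin
system, as a function of the noise-intensity ratio `r = T^X / T^Y` (Eq. (A5)). -/
noncomputable def etaY (a11 a12 a21 a22 r : ℝ) : ℝ :=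
  (a11 + a22) * (a21 * a22 * r + a11 * a12) /
    (a21 * (a12 ^ 2 - 2 * a12 * a21 * r + r * ((a11 + a22) ^ 2 + a21 ^ 2 * r)))

/-- Steady-state single-step sensory capacity `C̄_Y` of the bipartite linear Langevin system,
as a function of the noise-intensity ratio `r = T^X / T^Y` (Eq. (A6)). -/
noncomputable def sCapY (a11 a12 a21 a22 r : ℝ) : ℝ :=
  4 * (a11 + a22) * (a21 * r - a12) * (a21 * a22 * r + a11 * a12) *
      (a21 ^ 2 * r - a12 * a21 + a11 * (a11 + a22)) /
    (a21 ^ 2 * (a12 ^ 2 - 2 * a12 * a21 * r + r * ((a11 + a22) ^ 2 + a21 ^ 2 * r)) ^ 2)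

section

variable (a11 a12 a21 a22 r : ℝ)

noncomputable def etaYDenom : ℝ :=
  a12 ^ 2 - 2 * a12 * a21 * r + r * ((a11 + a22) ^ 2 + a21 ^ 2 * r)

theorem etaYDenom_eq_sq_add_mul_sq :
    etaYDenom a11 a12 a21 a22 r = (a12 - a21 * r) ^ 2 + r * (a11 + a22) ^ 2 := by
  unfold etaYDenom
  ring

variable {a11 a12 a21 a22 r}

theorem etaYDenom_pos (hs : a11 + a22 ≠ 0) (hr : 0 < r) : 0 < etaYDenom a11 a12 a21 a22 r := by
  rw [etaYDenom_eq_sq_add_mul_sq]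
  positivity

theorem one_sub_etaY (h21 : a21 ≠ 0) (hD : etaYDenom a11 a12 a21 a22 r ≠ 0) :
    1 - etaY a11 a12 a21 a22 r =
      (a21 * r - a12) * (a21 ^ 2 * r - a12 * a21 + a11 * (a11 + a22)) /
        (a21 * etaYDenom a11 a12 a21 a22 r) := by
  change 1 - _ / (a21 * etaYDenom a11 a12 a21 a22 r) = _
  rw [one_sub_div (mul_ne_zero h21 hD)]
  congr 1
  unfold etaYDenom
  ring

variable (a11 a12 a21 a22 r)

theorem sCapY_eq_four_mul_etaY_mul :
    sCapY a11 a12 a21 a22 r =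
      4 * etaY a11 a12 a21 a22 r *
        ((a21 * r - a12) * (a21 ^ 2 * r - a12 * a21 + a11 * (a11 + a22)) /
          (a21 * etaYDenom a11 a12 a21 a22 r)) := by
  rw [etaY, mul_assoc, div_mul_div_comm, mul_div_assoc', sCapY, etaYDenom]
  congr 1 <;> ring

end

theorem sCapY_eq_tradeoff_general (a11 a12 a21 a22 r : ℝ) (h21 : a21 ≠ 0)
    (hstab1 : a11 + a22 < 0) (hr : 0 < r) :
    sCapY a11 a12 a21 a22 r =
      4 * etaY a11 a12 a21 a22 r * (1 - etaY a11 a12 a21 a22 r) := by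
  have hD : etaYDenom a11 a12 a21 a22 r ≠ 0 := (etaYDenom_pos hstab1.ne hr).ne'
  rw [sCapY_eq_four_mul_etaY_mul, one_sub_etaY h21 hD]

/-- Equation (43): the exact trade-off `C̄_Y = 4 η_Y (1 − η_Y)` for stationary bipartite
linear Langevin systems. -/
theorem sCapY_eq_tradeoff (a11 a12 a21 a22 r : ℝ) (h21 : a21 ≠ 0)
    (hstab1 : a11 + a22 < 0) (hstab2 : a11 * a22 - a12 * a21 > 0) (hr : 0 < r) :
    sCapY a11 a12 a21 a22 r =
      4 * etaY a11 a12 a21 a22 r * (1 - etaY a11 a12 a21 a22 r) :=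
  sCapY_eq_tradeoff_general a11 a12 a21 a22 r h21 hstab1 hr
end

section
/- Let a¹¹, a¹², a²¹, a²² be real numbers with a²¹ ≠ 0 satisfying the stability conditions a¹¹ + a²² < 0 and a¹¹a²² − a¹²a²¹ > 0, and let r > 0. If the single-step sensory capacity takes its maximum value, C̄_Y(r) = 1, then the information-thermodynamic efficiency equals one-half: η_Y(r) = 1/2. (The existence of a sufficient statistic forces the energetic efficiency to be at most one-half, Eq. (22) for the single-step quantities.) -/
/-- Eq. (22) for the single-step quantities: if the single-step sensory capacity takes its
maximum value `C̄_Y = 1`, then the information-thermodynamic efficiency equals one-half. -/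
theorem max_sensory_capacity_implies_half_efficiency (a11 a12 a21 a22 r : ℝ) (h21 : a21 ≠ 0)
    (hstab1 : a11 + a22 < 0) (hstab2 : a11 * a22 - a12 * a21 > 0) (hr : 0 < r)
    (hcap : sCapY a11 a12 a21 a22 r = 1) :
    etaY a11 a12 a21 a22 r = 1 / 2 := by
  set D : ℝ := a12 ^ 2 - 2 * a12 * a21 * r + r * ((a11 + a22) ^ 2 + a21 ^ 2 * r) with hD
  have hDpos : 0 < D := by
    have h1 : D = (a12 - a21 * r) ^ 2 + r * (a11 + a22) ^ 2 := by rw [hD]; ring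
    have h2 : 0 < r * (a11 + a22) ^ 2 := mul_pos hr (pow_two_pos_of_ne_zero (ne_of_lt hstab1))
    nlinarith [sq_nonneg (a12 - a21 * r)]
  have hDne : D ≠ 0 := ne_of_gt hDpos
  have hden : a21 ^ 2 * D ^ 2 ≠ 0 := by positivity
  have hcap' : 4 * (a11 + a22) * (a21 * r - a12) * (a21 * a22 * r + a11 * a12) *
      (a21 ^ 2 * r - a12 * a21 + a11 * (a11 + a22)) = a21 ^ 2 * D ^ 2 := by
    have := hcap
    unfold sCapY at this
    rw [← hD] at this
    field_simp at this
    linarith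
  have hkey : (a21 * D - 2 * (a11 + a22) * (a21 * a22 * r + a11 * a12)) ^ 2 = 0 := by
    have : (a21 * D - 2 * (a11 + a22) * (a21 * a22 * r + a11 * a12)) ^ 2 =
        a21 ^ 2 * D ^ 2 - 4 * (a11 + a22) * (a21 * r - a12) * (a21 * a22 * r + a11 * a12) *
          (a21 ^ 2 * r - a12 * a21 + a11 * (a11 + a22)) := by rw [hD]; ring
    rw [this, ← hcap']; ring
  have heq : a21 * D = 2 * (a11 + a22) * (a21 * a22 * r + a11 * a12) := by
    have := pow_eq_zero_iff (n := 2) (by norm_num) |>.mp hkey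
    linarith
  have hne : a21 * D ≠ 0 := mul_ne_zero h21 hDne
  unfold etaY
  rw [← hD]
  rw [div_eq_iff hne]
  rw [hD] at heq
  linear_combination - heq / 2
end
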